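/- arXiv:2003.00359 — 2 statements merged into one kernel-verified Lean document; each statement's English description precedes it below -/
import Mathlib

section
/- With A_t = I_d + Σ_{s=1}^{t} x_s x_sᵀ and ‖x_s‖₂ ≤ 1 for all s, the elliptical potential bound holds: Σ_{s=1}^{t} x_sᵀ A_{s-1}⁻¹ x_s ≤ 2·log(det(A_t)) ≤ 2d·log(1 + t/d). -/
/-!
Write `A_s = I + ∑_{r<s} x_r x_rᵀ` and `q_s = x_sᵀ A_s⁻¹ x_s`. Since `A_s ⪰ I`, `q_s ≤ ‖x_s‖² ≤ 1`,
and the matrix determinant lemma gives `det A_{s+1} = det A_s (1 + q_s)`, so `log det A_t`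
telescopes to `∑_{s<t} log (1 + q_s)`; on `[0, 1]`, `q ≤ 2 log (1 + q)`. For the second bound,
AM–GM on the eigenvalues gives `det A_t ≤ (tr A_t / d)^d`, and `tr A_t = d + ∑ ‖x_s‖² ≤ d + t`.
-/

open Matrix Finset Real

lemma sq_dotProduct_le {n : Type*} [Fintype n] (u v : n → ℝ) :
    (u ⬝ᵥ v) ^ 2 ≤ (u ⬝ᵥ u) * (v ⬝ᵥ v) := by
  simpa [dotProduct, sq] using sum_mul_sq_le_sq_mul_sq univ u v

section

variable {n : Type*} [Fintype n] [DecidableEq n]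

lemma Matrix.det_add_vecMulVec {A : Matrix n n ℝ} (hA : IsUnit A.det) (u v : n → ℝ) :
    (A + vecMulVec u v).det = A.det * (1 + v ⬝ᵥ A⁻¹ *ᵥ u) := by
  rw [vecMulVec_eq Unit, det_add_replicateCol_mul_replicateRow hA, det_unique (n := Unit),
    dotProduct_mulVec]
  simp [Matrix.mul_apply, vecMul, dotProduct]

/-- With `y = (1 + P)⁻¹ v` one has `y ⬝ y ≤ y ⬝ (1 + P) y = v ⬝ y`, so Cauchy–Schwarz gives
`(v ⬝ y)² ≤ (v ⬝ v) (y ⬝ y) ≤ (v ⬝ v) (v ⬝ y)`. -/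
lemma dotProduct_inv_one_add_mulVec_le {P : Matrix n n ℝ} (hP : P.PosSemidef) (v : n → ℝ) :
    v ⬝ᵥ (1 + P)⁻¹ *ᵥ v ≤ v ⬝ᵥ v := by
  set y := (1 + P)⁻¹ *ᵥ v
  have hy : (1 + P) *ᵥ y = v := by
    rw [mulVec_mulVec, mul_nonsing_inv _ (PosDef.one.add_posSemidef hP).det_pos.ne'.isUnit,
      one_mulVec]
  have hyy : y ⬝ᵥ y ≤ v ⬝ᵥ y := by
    have := hP.dotProduct_mulVec_nonneg y
    rw [← hy, dotProduct_comm, add_mulVec, one_mulVec, add_dotProduct, dotProduct_comm (P *ᵥ y)]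
    simpa using this
  have hcs := sq_dotProduct_le v y
  have h0 : 0 ≤ y ⬝ᵥ y := by simpa using dotProduct_self_star_nonneg y
  have h1 : 0 ≤ v ⬝ᵥ v := by simpa using dotProduct_self_star_nonneg v
  nlinarith

lemma Matrix.PosSemidef.det_le_trace_div_card_pow {A : Matrix n n ℝ} (hA : A.PosSemidef) :
    A.det ≤ (A.trace / Fintype.card n) ^ Fintype.card n := by
  rcases isEmpty_or_nonempty n with hn | hn
  · simp
  have hev := hA.eigenvalues_nonneg
  have amgm := geom_mean_le_arith_mean univ (fun _ => 1) hA.1.eigenvalues (by simp)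
    (by simpa using Fintype.card_pos) (fun i _ => hev i)
  simp only [rpow_one, sum_const, card_univ, nsmul_eq_mul, mul_one, one_mul] at amgm
  rw [hA.1.det_eq_prod_eigenvalues, hA.1.trace_eq_sum_eigenvalues]
  calc ∏ i, hA.1.eigenvalues i
      = ((∏ i, hA.1.eigenvalues i) ^ ((Fintype.card n : ℝ)⁻¹)) ^ Fintype.card n :=
        (rpow_inv_natCast_pow (prod_nonneg fun i _ => hev i) Fintype.card_ne_zero).symm
    _ ≤ _ := pow_le_pow_left₀ (rpow_nonneg (prod_nonneg fun i _ => hev i) _) amgm _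

end

lemma le_two_mul_log_one_add {u : ℝ} (h0 : 0 ≤ u) (h1 : u ≤ 1) : u ≤ 2 * log (1 + u) := by
  have := one_sub_inv_le_log_of_pos (show 0 < 1 + u by linarith)
  have h : u / 2 ≤ 1 - (1 + u)⁻¹ := by
    rw [show 1 - (1 + u)⁻¹ = u / (1 + u) by field_simp; ring]
    exact div_le_div_of_nonneg_left h0 (by linarith) (by linarith)
  linarith

lemma posSemidef_sum_vecMulVec_self {ι n : Type*} [Fintype n] (s : Finset ι) (x : ι → n → ℝ) :
    (∑ i ∈ s, vecMulVec (x i) (x i)).PosSemidef :=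
  posSemidef_sum _ fun i _ => by simpa using posSemidef_vecMulVec_self_star (x i)

section

variable {n : Type*} [DecidableEq n] (x : ℕ → n → ℝ)

def designMatrix (t : ℕ) : Matrix n n ℝ :=
  1 + ∑ s ∈ range t, vecMulVec (x s) (x s)

lemma designMatrix_succ (t : ℕ) :
    designMatrix x (t + 1) = designMatrix x t + vecMulVec (x t) (x t) := by
  rw [designMatrix, designMatrix, sum_range_succ, add_assoc]

variable [Fintype n]

lemma posDef_designMatrix (t : ℕ) : (designMatrix x t).PosDef :=
  PosDef.one.add_posSemidef (posSemidef_sum_vecMulVec_self _ x)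

lemma dotProduct_inv_designMatrix_mulVec_nonneg (t : ℕ) (v : n → ℝ) :
    0 ≤ v ⬝ᵥ (designMatrix x t)⁻¹ *ᵥ v := by
  simpa using (posDef_designMatrix x t).inv.posSemidef.dotProduct_mulVec_nonneg v

lemma dotProduct_inv_designMatrix_mulVec_le (t : ℕ) (v : n → ℝ) :
    v ⬝ᵥ (designMatrix x t)⁻¹ *ᵥ v ≤ v ⬝ᵥ v :=
  dotProduct_inv_one_add_mulVec_le (posSemidef_sum_vecMulVec_self _ x) v

lemma det_designMatrix_succ (t : ℕ) :
    (designMatrix x (t + 1)).det =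
      (designMatrix x t).det * (1 + x t ⬝ᵥ (designMatrix x t)⁻¹ *ᵥ x t) := by
  rw [designMatrix_succ, det_add_vecMulVec (posDef_designMatrix x t).det_pos.ne'.isUnit]

lemma log_det_designMatrix (t : ℕ) :
    log (designMatrix x t).det =
      ∑ s ∈ range t, log (1 + x s ⬝ᵥ (designMatrix x s)⁻¹ *ᵥ x s) := by
  induction t with
  | zero => simp [designMatrix]
  | succ t ih =>
    have hq := dotProduct_inv_designMatrix_mulVec_nonneg x t (x t)
    rw [det_designMatrix_succ, log_mul (posDef_designMatrix x t).det_pos.ne' (by positivity), ih,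
      sum_range_succ]

lemma trace_designMatrix (t : ℕ) :
    (designMatrix x t).trace = Fintype.card n + ∑ s ∈ range t, x s ⬝ᵥ x s := by
  simp [designMatrix, trace_sum, trace_vecMulVec]

variable {x}

theorem sum_dotProduct_inv_designMatrix_mulVec_le (hx : ∀ s, x s ⬝ᵥ x s ≤ 1) (t : ℕ) :
    ∑ s ∈ range t, x s ⬝ᵥ (designMatrix x s)⁻¹ *ᵥ x s ≤ 2 * log (designMatrix x t).det := by
  rw [log_det_designMatrix, mul_sum]
  exact sum_le_sum fun s _ => le_two_mul_log_one_add
    (dotProduct_inv_designMatrix_mulVec_nonneg x s (x s))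
    ((dotProduct_inv_designMatrix_mulVec_le x s (x s)).trans (hx s))

theorem det_designMatrix_le (hx : ∀ s, x s ⬝ᵥ x s ≤ 1) (t : ℕ) :
    (designMatrix x t).det ≤ (1 + t / Fintype.card n) ^ Fintype.card n := by
  refine (posDef_designMatrix x t).posSemidef.det_le_trace_div_card_pow.trans ?_
  have htrace : (designMatrix x t).trace ≤ Fintype.card n + t := by
    rw [trace_designMatrix]
    simpa using sum_le_sum fun s (_ : s ∈ range t) => hx s
  gcongr
  · exact div_nonneg (posDef_designMatrix x t).posSemidef.trace_nonneg (by positivity)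
  · calc (designMatrix x t).trace / Fintype.card n
        ≤ (Fintype.card n + t) / Fintype.card n := by gcongr
      _ ≤ 1 + t / Fintype.card n := by rw [add_div]; gcongr; exact div_self_le_one _

end

theorem elliptical_potential_general (d t : ℕ) (x : ℕ → Fin d → ℝ)
    (hx : ∀ s, ∑ i, (x s i) ^ 2 ≤ 1)
    (A : ℕ → Matrix (Fin d) (Fin d) ℝ)
    (hA : ∀ n, A n = 1 + ∑ s ∈ Finset.range n, vecMulVec (x s) (x s)) :
    (∑ s ∈ Finset.range t, x s ⬝ᵥ (A s)⁻¹ *ᵥ x s ≤ 2 * Real.log (A t).det) ∧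
    2 * Real.log (A t).det ≤ 2 * d * Real.log (1 + (t : ℝ) / d) := by
  obtain rfl : A = designMatrix x := funext hA
  have hx' : ∀ s, x s ⬝ᵥ x s ≤ 1 := by simpa [dotProduct, sq] using hx
  refine ⟨sum_dotProduct_inv_designMatrix_mulVec_le hx' t, ?_⟩
  have hlog := log_le_log (posDef_designMatrix x t).det_pos (det_designMatrix_le hx' t)
  rw [Fintype.card_fin, log_pow] at hlog
  linarith

theorem elliptical_potential (d t : ℕ) (hd : 0 < d) (x : ℕ → Fin d → ℝ)
    (hx : ∀ s, ∑ i, (x s i) ^ 2 ≤ 1)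
    (A : ℕ → Matrix (Fin d) (Fin d) ℝ)
    (hA : ∀ n, A n = 1 + ∑ s ∈ Finset.range n, vecMulVec (x s) (x s)) :
    (∑ s ∈ Finset.range t, x s ⬝ᵥ (A s)⁻¹ *ᵥ x s ≤ 2 * Real.log (A t).det) ∧
    2 * Real.log (A t).det ≤ 2 * d * Real.log (1 + (t : ℝ) / d) :=
  elliptical_potential_general d t x hx A hA
end

section
/- UCB dominance implies regret bound: let θ, θ̂_a, θ̂_b ∈ ℝ^d, x ∈ ℝ^d, and A_a, A_b positive definite d×d matrices with α ≥ ‖θ̂_a - θ_a‖_{A_a} and α ≥ ‖θ̂_b - θ_b‖_{A_b} (A-weighted norms of estimation errors for true parameters θ_a, θ_b). If xᵀθ̂_b + α‖x‖_{A_b⁻¹} ≥ xᵀθ̂_a + α‖x‖_{A_a⁻¹}, then xᵀθ_a - xᵀθ_b ≤ 2α‖x‖_{A_b⁻¹}. -/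
/-!
The regret `x ⬝ θa - x ⬝ θb` splits as `x ⬝ (θa - θ̂a) + (x ⬝ θ̂a - x ⬝ θ̂b) + x ⬝ (θ̂b - θb)`.
Cauchy–Schwarz for the inner product `⟪u, v⟫ = u ⬝ A v`, applied to `A⁻¹ x` and `v`, gives
`|x ⬝ v| ≤ ‖v‖_A ‖x‖_{A⁻¹}`, so the outer terms are at most the exploration bonuses
`α ‖x‖_{Aa⁻¹}` and `α ‖x‖_{Ab⁻¹}`, while UCB dominance bounds the middle term by their difference.
-/

open Matrix Real

namespace Matrix

variable {n : Type*} [Fintype n]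

theorem PosSemidef.sq_dotProduct_mulVec_le {M : Matrix n n ℝ} (hM : M.PosSemidef) (u v : n → ℝ) :
    (u ⬝ᵥ M *ᵥ v) ^ 2 ≤ (u ⬝ᵥ M *ᵥ u) * (v ⬝ᵥ M *ᵥ v) := by
  let := M.toSeminormedAddCommGroup hM
  let := M.toInnerProductSpace hM
  have h := real_inner_mul_inner_self_le u v
  change (M *ᵥ v) ⬝ᵥ u * ((M *ᵥ v) ⬝ᵥ u) ≤ (M *ᵥ u) ⬝ᵥ u * ((M *ᵥ v) ⬝ᵥ v) at h
  simpa only [dotProduct_comm _ u, dotProduct_comm _ v, sq] using h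

variable [DecidableEq n]

theorem PosDef.sq_dotProduct_le {A : Matrix n n ℝ} (hA : A.PosDef) (x v : n → ℝ) :
    (x ⬝ᵥ v) ^ 2 ≤ (x ⬝ᵥ A⁻¹ *ᵥ x) * (v ⬝ᵥ A *ᵥ v) := by
  have hAt : Aᵀ = A := (conjTranspose_eq_transpose_of_trivial A).symm.trans hA.isHermitian
  have hx : A *ᵥ (A⁻¹ *ᵥ x) = x := by
    rw [mulVec_mulVec, mul_nonsing_inv _ ((isUnit_iff_isUnit_det A).mp hA.isUnit), one_mulVec]
  have hxv : A⁻¹ *ᵥ x ⬝ᵥ A *ᵥ v = x ⬝ᵥ v := by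
    rw [dotProduct_mulVec, ← mulVec_transpose, hAt, hx]
  have hxx : A⁻¹ *ᵥ x ⬝ᵥ A *ᵥ (A⁻¹ *ᵥ x) = x ⬝ᵥ A⁻¹ *ᵥ x := by
    rw [hx, dotProduct_comm]
  simpa only [hxv, hxx] using hA.posSemidef.sq_dotProduct_mulVec_le (A⁻¹ *ᵥ x) v

theorem PosDef.abs_dotProduct_le_of_sqrt_le {A : Matrix n n ℝ} (hA : A.PosDef) (x : n → ℝ)
    {v : n → ℝ} {α : ℝ} (hv : √(v ⬝ᵥ A *ᵥ v) ≤ α) : |x ⬝ᵥ v| ≤ α * √(x ⬝ᵥ A⁻¹ *ᵥ x) :=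
  calc |x ⬝ᵥ v| ≤ √(x ⬝ᵥ A⁻¹ *ᵥ x) * √(v ⬝ᵥ A *ᵥ v) := by
        rw [← sqrt_mul' _ (by simpa using hA.posSemidef.dotProduct_mulVec_nonneg v)]
        exact abs_le_sqrt (hA.sq_dotProduct_le x v)
    _ ≤ α * √(x ⬝ᵥ A⁻¹ *ᵥ x) := by
        rw [mul_comm]
        exact mul_le_mul_of_nonneg_right hv (sqrt_nonneg _)

end Matrix

theorem ucb_dominance (d : ℕ) (x θa θb θha θhb : Fin d → ℝ)
    (Aa Ab : Matrix (Fin d) (Fin d) ℝ) (hAa : Aa.PosDef) (hAb : Ab.PosDef) (α : ℝ)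
    (ha : Real.sqrt ((θha - θa) ⬝ᵥ Aa *ᵥ (θha - θa)) ≤ α)
    (hb : Real.sqrt ((θhb - θb) ⬝ᵥ Ab *ᵥ (θhb - θb)) ≤ α)
    (hucb : x ⬝ᵥ θha + α * Real.sqrt (x ⬝ᵥ Aa⁻¹ *ᵥ x) ≤
      x ⬝ᵥ θhb + α * Real.sqrt (x ⬝ᵥ Ab⁻¹ *ᵥ x)) :
    x ⬝ᵥ θa - x ⬝ᵥ θb ≤ 2 * α * Real.sqrt (x ⬝ᵥ Ab⁻¹ *ᵥ x) := by
  have hea := hAa.abs_dotProduct_le_of_sqrt_le x ha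
  have heb := hAb.abs_dotProduct_le_of_sqrt_le x hb
  rw [dotProduct_sub] at hea heb
  linarith [neg_abs_le (x ⬝ᵥ θha - x ⬝ᵥ θa), le_abs_self (x ⬝ᵥ θhb - x ⬝ᵥ θb)]
end
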